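/- Suppose A is a right H-comodule algebra with B = A^{co H} and γ : H → A is a convolution-invertible H-comodule map with γ(1)=1. With weak action h·b = Σ γ(h₍₁₎) b γ⁻¹(h₍₂₎) and cocycle σ(h,g) = Σ γ(h₍₁₎) γ(g₍₁₎) γ⁻¹(h₍₂₎ g₍₂₎), B is a twisted H-module: Σ (h₍₁₎ · (g₍₁₎ · b)) σ(h₍₂₎, g₍₂₎) = Σ σ(h₍₁₎, g₍₁₎) ((h₍₂₎ g₍₂₎) · b) for all h, g ∈ H and b ∈ B. -/

import Mathlib

open TensorProduct LinearMap

noncomputable section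

namespace CrossedGalois

/-- Convolution product of two linear maps from a coalgebra to an algebra. -/
def conv (k : Type) [Field k] {C B : Type} [AddCommGroup C] [Module k C] [Coalgebra k C]
    [Ring B] [Algebra k B] (f g : C →ₗ[k] B) : C →ₗ[k] B :=
  (LinearMap.mul' k B) ∘ₗ (TensorProduct.map f g) ∘ₗ (Coalgebra.comul (R := k))

/-- The unit `η ∘ ε` for the convolution product. -/
def convOne (k : Type) [Field k] (C B : Type) [AddCommGroup C] [Module k C] [Coalgebra k C]
    [Ring B] [Algebra k B] : C →ₗ[k] B :=
  (Algebra.linearMap k B) ∘ₗ (Coalgebra.counit (R := k))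

/-- Convolution invertibility. -/
def ConvInvertible (k : Type) [Field k] {C B : Type} [AddCommGroup C] [Module k C]
    [Coalgebra k C] [Ring B] [Algebra k B] (f : C →ₗ[k] B) : Prop :=
  ∃ g : C →ₗ[k] B, conv k f g = convOne k C B ∧ conv k g f = convOne k C B

variable (k : Type) [Field k]

section CrossedProduct

variable (B H : Type) [Ring B] [Algebra k B] [Ring H] [Bialgebra k H]

/-- `h ↦ α (h ⊗ b)`. -/
def actOn (α : H ⊗[k] B →ₗ[k] B) (b : B) : H →ₗ[k] B :=
  α ∘ₗ ((TensorProduct.mk k H B).flip b)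

/-- `α` is a weak action of the bialgebra `H` on the algebra `B` :
`h · (ab) = Σ (h₁ · a)(h₂ · b)` and `h · 1 = ε(h) 1`. -/
structure IsWeakAction (α : H ⊗[k] B →ₗ[k] B) : Prop where
  smul_mul : ∀ (h : H) (a b : B),
    α (h ⊗ₜ (a * b)) =
      LinearMap.mul' k B ((TensorProduct.map α α)
        ((TensorProduct.tensorTensorTensorComm k H H B B)
          ((Coalgebra.comul (R := k) h) ⊗ₜ (a ⊗ₜ b))))
  smul_one : ∀ h : H, α (h ⊗ₜ (1 : B)) = (Coalgebra.counit (R := k) h) • (1 : B)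

/-- The 2-cocycle condition
`Σ (h₁ · σ(g₁,l₁)) σ(h₂, g₂l₂) = Σ σ(h₁,g₁) σ(h₂g₂, l)`
together with the normalisation `σ(h,1) = σ(1,h) = ε(h)1`. -/
structure IsCocycle (α : H ⊗[k] B →ₗ[k] B) (σ : H ⊗[k] H →ₗ[k] B) : Prop where
  cocycle :
    conv k (α ∘ₗ lTensor H σ) (σ ∘ₗ lTensor H (LinearMap.mul' k H)) =
    conv k (σ ∘ₗ lTensor H ((TensorProduct.rid k H).toLinearMap ∘ₗ
              lTensor H (Coalgebra.counit (R := k))))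
           (σ ∘ₗ (rTensor H (LinearMap.mul' k H)) ∘ₗ
              (TensorProduct.assoc k H H H).symm.toLinearMap)
  norm_right : ∀ h : H, σ (h ⊗ₜ (1 : H)) = (Coalgebra.counit (R := k) h) • (1 : B)
  norm_left : ∀ h : H, σ ((1 : H) ⊗ₜ h) = (Coalgebra.counit (R := k) h) • (1 : B)

/-- `B` is a twisted `H`-module:  `1 · b = b` and
`Σ (h₁ · (g₁ · b)) σ(h₂,g₂) = Σ σ(h₁,g₁) ((h₂g₂) · b)`. -/
structure IsTwistedModule (α : H ⊗[k] B →ₗ[k] B) (σ : H ⊗[k] H →ₗ[k] B) : Prop where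
  one_smul : ∀ b : B, α ((1 : H) ⊗ₜ b) = b
  twisted : ∀ b : B,
    conv k (α ∘ₗ lTensor H (actOn k B H α b)) σ =
    conv k σ ((actOn k B H α b) ∘ₗ LinearMap.mul' k H)

/-- The multiplication of the crossed product `B #_σ H`:
`(a # h)(b # g) = Σ a (h₁·b) σ(h₂,g₁) # h₃g₂`. -/
def cpMul (α : H ⊗[k] B →ₗ[k] B) (σ : H ⊗[k] H →ₗ[k] B) :
    (B ⊗[k] H) ⊗[k] (B ⊗[k] H) →ₗ[k] B ⊗[k] H :=
  (rTensor H (LinearMap.mul' k B)) ∘ₗ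
  (TensorProduct.assoc k B B H).symm.toLinearMap ∘ₗ
  (lTensor B
    ((rTensor H (LinearMap.mul' k B)) ∘ₗ
     (TensorProduct.assoc k B B H).symm.toLinearMap ∘ₗ
     (TensorProduct.map α (TensorProduct.map σ (LinearMap.mul' k H))) ∘ₗ
     (lTensor (H ⊗[k] B) (TensorProduct.tensorTensorTensorComm k H H H H).toLinearMap) ∘ₗ
     (TensorProduct.tensorTensorTensorComm k H (H ⊗[k] H) B (H ⊗[k] H)).toLinearMap ∘ₗ
     (TensorProduct.map ((lTensor H (Coalgebra.comul (R := k))) ∘ₗ (Coalgebra.comul (R := k)))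
       (lTensor B (Coalgebra.comul (R := k)))))) ∘ₗ
  (TensorProduct.assoc k B H (B ⊗[k] H)).toLinearMap

/-- The unit `1 # 1` of the crossed product. -/
def cpOne : B ⊗[k] H := (1 : B) ⊗ₜ (1 : H)

/-- The crossed product multiplication is associative with unit `1 ⊗ 1`. -/
def IsCpAlgebra (α : H ⊗[k] B →ₗ[k] B) (σ : H ⊗[k] H →ₗ[k] B) : Prop :=
  (∀ x y z : B ⊗[k] H,
      cpMul k B H α σ ((cpMul k B H α σ (x ⊗ₜ y)) ⊗ₜ z) =
      cpMul k B H α σ (x ⊗ₜ (cpMul k B H α σ (y ⊗ₜ z)))) ∧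
  (∀ x : B ⊗[k] H, cpMul k B H α σ ((cpOne k B H) ⊗ₜ x) = x) ∧
  (∀ x : B ⊗[k] H, cpMul k B H α σ (x ⊗ₜ (cpOne k B H)) = x)

/-- The right `H`-coaction `id_B ⊗ Δ` on `B ⊗ H`. -/
def cpCoact : B ⊗[k] H →ₗ[k] (B ⊗[k] H) ⊗[k] H :=
  (TensorProduct.assoc k B H H).symm.toLinearMap ∘ₗ lTensor B (Coalgebra.comul (R := k))

end CrossedProduct

section Galois

variable (H : Type) [Ring H] [Bialgebra k H]

/-- The submodule of `A ⊗ A` spanned by `xb ⊗ y - x ⊗ by` for `b` in a given subset `S`,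
with respect to a given multiplication map `M`; its quotient is `A ⊗_B A`. -/
def midRel {A : Type} [AddCommGroup A] [Module k A]
    (M : A ⊗[k] A →ₗ[k] A) (S : Set A) : Submodule k (A ⊗[k] A) :=
  Submodule.span k {z | ∃ x y b, b ∈ S ∧
    z = (M (x ⊗ₜ b)) ⊗ₜ y - x ⊗ₜ (M (b ⊗ₜ y))}

/-- The map `can' : A ⊗ A → A ⊗ H`, `x ⊗ y ↦ Σ x y₍₀₎ ⊗ y₍₁₎`. -/
def canMap {A : Type} [AddCommGroup A] [Module k A]
    (M : A ⊗[k] A →ₗ[k] A) (ρ : A →ₗ[k] A ⊗[k] H) : A ⊗[k] A →ₗ[k] A ⊗[k] H :=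
  (rTensor H M) ∘ₗ (TensorProduct.assoc k A A H).symm.toLinearMap ∘ₗ (lTensor A ρ)

/-- The extension is `H`-Galois: the canonical map descends to a bijection
`A ⊗_B A → A ⊗ H`. -/
def IsGalois {A : Type} [AddCommGroup A] [Module k A]
    (M : A ⊗[k] A →ₗ[k] A) (ρ : A →ₗ[k] A ⊗[k] H) (S : Set A) : Prop :=
  ∃ can : ((A ⊗[k] A) ⧸ midRel k M S) →ₗ[k] A ⊗[k] H,
    can ∘ₗ (midRel k M S).mkQ = canMap k H M ρ ∧ Function.Bijective can

/-- `A` is a right `H`-comodule algebra. -/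
structure IsComodAlg {A : Type} [Ring A] [Algebra k A]
    (ρ : A →ₗ[k] A ⊗[k] H) : Prop where
  coassoc : ∀ a : A, (rTensor H ρ) (ρ a) =
    (TensorProduct.assoc k A H H).symm ((lTensor A (Coalgebra.comul (R := k))) (ρ a))
  counit_id : ∀ a : A,
    (TensorProduct.rid k A) ((lTensor A (Coalgebra.counit (R := k))) (ρ a)) = a
  mul : ∀ a b : A, ρ (a * b) = ρ a * ρ b
  one : ρ 1 = 1

end Galois

end CrossedGalois

namespace CrossedGalois

/-- `h ⊗ a ↦ Σ γ(h₁) a μ(h₂)`. -/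
def actL (k A H : Type) [Field k] [Ring A] [Algebra k A] [Ring H] [Bialgebra k H]
    (γ μ : H →ₗ[k] A) : H ⊗[k] A →ₗ[k] A :=
  (LinearMap.mul' k A) ∘ₗ (lTensor A (LinearMap.mul' k A)) ∘ₗ
  (TensorProduct.map γ (lTensor A μ)) ∘ₗ
  (lTensor H (TensorProduct.comm k H A).toLinearMap) ∘ₗ
  (TensorProduct.assoc k H H A).toLinearMap ∘ₗ
  (rTensor A (Coalgebra.comul (R := k)))

/-- `σ(h,g) = Σ γ(h₁) γ(g₁) μ(h₂ g₂)`. -/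
def sigMap (k A H : Type) [Field k] [Ring A] [Algebra k A] [Ring H] [Bialgebra k H]
    (γ μ : H →ₗ[k] A) : H ⊗[k] H →ₗ[k] A :=
  conv k ((LinearMap.mul' k A) ∘ₗ TensorProduct.map γ γ) (μ ∘ₗ LinearMap.mul' k H)

/-- `ω(h,g) = Σ γ(h₁ g₁) μ(g₂) μ(h₂)`. -/
def omgMap (k A H : Type) [Field k] [Ring A] [Algebra k A] [Ring H] [Bialgebra k H]
    (γ μ : H →ₗ[k] A) : H ⊗[k] H →ₗ[k] A :=
  conv k (γ ∘ₗ LinearMap.mul' k H)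
    ((LinearMap.mul' k A) ∘ₗ (TensorProduct.map μ μ) ∘ₗ (TensorProduct.comm k H H).toLinearMap)

end CrossedGalois

namespace CrossedGalois

/-!
Everything takes place in the convolution algebras of linear maps `H → A` and `H ⊗ H → A`.
Write `b` also for the map `x ↦ ε(x) b`, and let `Γ(h ⊗ g) = γ(h) γ(g)`, `M(h ⊗ g) = μ(g) μ(h)`,
`Γ' = γ ∘ m`, `M' = μ ∘ m`, where `m` is the multiplication of `H`. Then `h · b = (γ * b * μ)(h)`,
so `h · (g · b)` is `Γ * b * M`, `(hg) · b` is `Γ' * b * M'` (precomposition with the coalgebra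
map `m` is a ring map of convolution algebras), and `σ = Γ * M'`. From `μ * γ = ε` one gets
`M * Γ = 1` and `M' * Γ' = 1`, so both sides of the twisted module identity equal `Γ * b * M'`.
-/

open WithConv Coalgebra

section Convolution

variable {R C D A : Type*} [CommSemiring R] [AddCommMonoid C] [Module R C] [Coalgebra R C]
  [AddCommMonoid D] [Module R D] [Coalgebra R D] [Semiring A] [Algebra R A]

def convConst (a : A) : WithConv (C →ₗ[R] A) :=
  toConv (LinearMap.toSpanSingleton R A a ∘ₗ counit)

lemma convConst_mul (a : A) (f : WithConv (C →ₗ[R] A)) :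
    convConst a * f = toConv (LinearMap.mulLeft R a ∘ₗ f.ofConv) := by
  ext x
  have hx := congrArg (LinearMap.mulLeft R a ∘ₗ f.ofConv) (sum_counit_smul (ℛ R x))
  simp only [LinearMap.comp_apply, map_sum, map_smul] at hx
  simp [(ℛ R x).convMul_apply, convConst, ← hx]

def convPrecomp (φ : D →ₗc[R] C) : WithConv (C →ₗ[R] A) →+* WithConv (D →ₗ[R] A) where
  toFun f := toConv (f.ofConv ∘ₗ (φ : D →ₗ[R] C))
  map_one' := by simp only [LinearMap.convOne_def, LinearMap.comp_assoc, CoalgHomClass.counit_comp]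
  map_mul' f g := congrArg toConv (LinearMap.convMul_comp_coalgHom_distrib f g φ)
  map_zero' := rfl
  map_add' _ _ := rfl

lemma convPrecomp_toConv (φ : D →ₗc[R] C) (f : C →ₗ[R] A) :
    convPrecomp φ (toConv f) = toConv (f ∘ₗ (φ : D →ₗ[R] C)) := rfl

lemma convPrecomp_convConst (φ : D →ₗc[R] C) (a : A) :
    convPrecomp φ (convConst a) = convConst a := by
  simp only [convConst, convPrecomp_toConv, LinearMap.comp_assoc, CoalgHomClass.counit_comp]

lemma sum_mul_eq_algebraMap_counit {f g : WithConv (C →ₗ[R] A)} (hfg : f * g = 1) {x : C}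
    {ι : Type*} (ℛx : Coalgebra.Repr R x ι) :
    ∑ i ∈ ℛx.index, f (ℛx.left i) * g (ℛx.right i) = algebraMap R A (counit x) := by
  rw [← ℛx.convMul_apply, hfg, LinearMap.convOne_apply]

lemma mul'_map_comm_convMul_mul'_map_eq_one {f g : C →ₗ[R] A} {f' g' : D →ₗ[R] A}
    (hfg : toConv f * toConv g = 1) (hfg' : toConv f' * toConv g' = 1) :
    toConv (LinearMap.mul' R A ∘ₗ map f' f ∘ₗ (TensorProduct.comm R C D).toLinearMap) *
      toConv (LinearMap.mul' R A ∘ₗ map g g') = 1 := by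
  ext1
  refine TensorProduct.ext' fun x y => ?_
  rw [LinearMap.convMul_apply, TensorProduct.comul_tmul, ← (ℛ R x).eq, ← (ℛ R y).eq]
  simp only [sum_tmul, tmul_sum, map_sum, AlgebraTensorModule.tensorTensorTensorComm_tmul,
    TensorProduct.map_tmul, LinearMap.comp_apply, LinearEquiv.coe_coe, comm_tmul,
    LinearMap.mul'_apply, LinearMap.convOne_apply, counit_tmul]
  calc _ = ∑ j ∈ (ℛ R y).index, f' ((ℛ R y).left j) *
          (∑ i ∈ (ℛ R x).index, f ((ℛ R x).left i) * g ((ℛ R x).right i)) *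
            g' ((ℛ R y).right j) := by
        simp only [Finset.mul_sum, Finset.sum_mul, mul_assoc]
    _ = _ := by
        simp only [sum_mul_eq_algebraMap_counit hfg, ← Algebra.commutes]
        simp only [mul_assoc, ← Finset.mul_sum, sum_mul_eq_algebraMap_counit hfg', smul_eq_mul,
          mul_comm (counit y), map_mul]

end Convolution

lemma conv_eq_ofConv_convMul {k C B : Type} [Field k] [AddCommGroup C] [Module k C]
    [Coalgebra k C] [Ring B] [Algebra k B] (f g : C →ₗ[k] B) :
    conv k f g = ofConv (toConv f * toConv g) := rfl

section InducedAction

variable {k A H : Type} [Field k] [Ring A] [Algebra k A] [Ring H] [Bialgebra k H]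
  (γ μ : H →ₗ[k] A)

lemma actL_tmul (a : A) {h : H} {ι : Type*} (ℛh : Coalgebra.Repr k h ι) :
    actL k A H γ μ (h ⊗ₜ a) = ∑ i ∈ ℛh.index, γ (ℛh.left i) * (a * μ (ℛh.right i)) := by
  simp only [actL, LinearMap.comp_apply, LinearMap.rTensor_tmul, ← ℛh.eq, sum_tmul, map_sum,
    LinearEquiv.coe_coe, TensorProduct.assoc_tmul, LinearMap.lTensor_tmul, comm_tmul,
    TensorProduct.map_tmul, LinearMap.mul'_apply]

lemma toConv_actOn_actL (a : A) :
    toConv (actOn k A H (actL k A H γ μ) a) = toConv γ * (convConst a * toConv μ) := by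
  ext h
  rw [convConst_mul, (ℛ k h).convMul_apply]
  exact actL_tmul γ μ a (ℛ k h)

lemma toConv_actOn_actL_comp_mul' (a : A) :
    toConv (actOn k A H (actL k A H γ μ) a ∘ₗ LinearMap.mul' k H) =
      toConv (γ ∘ₗ LinearMap.mul' k H) * (convConst a * toConv (μ ∘ₗ LinearMap.mul' k H)) := by
  have h := congrArg (convPrecomp (Bialgebra.mulCoalgHom k H)) (toConv_actOn_actL γ μ a)
  rwa [map_mul, map_mul, convPrecomp_convConst] at h

lemma toConv_actL_comp_lTensor_actOn (b : A) :
    toConv (actL k A H γ μ ∘ₗ LinearMap.lTensor H (actOn k A H (actL k A H γ μ) b)) =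
      toConv (LinearMap.mul' k A ∘ₗ map γ γ) * (convConst b *
        toConv (LinearMap.mul' k A ∘ₗ map μ μ ∘ₗ (TensorProduct.comm k H H).toLinearMap)) := by
  ext1
  refine TensorProduct.ext' fun h g => ?_
  rw [convConst_mul, ((ℛ k h).tmul (ℛ k g)).convMul_apply]
  simp only [LinearMap.comp_apply, LinearMap.lTensor_tmul, actOn, LinearMap.flip_apply, mk_apply,
    actL_tmul γ μ _ (ℛ k h), actL_tmul γ μ b (ℛ k g), Coalgebra.Repr.tmul_index,
    Coalgebra.Repr.tmul_left, Coalgebra.Repr.tmul_right, Finset.sum_product, TensorProduct.map_tmul,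
    LinearEquiv.coe_coe, comm_tmul, LinearMap.mul'_apply, LinearMap.mulLeft_apply, Finset.sum_mul,
    Finset.mul_sum, mul_assoc]

end InducedAction

theorem induced_twisted_module_general (k A H : Type) [Field k] [Ring A] [Algebra k A] [Ring H] [HopfAlgebra k H]
    (S : Subalgebra k A)
    (γ μ : H →ₗ[k] A)
    (hconv : conv k γ μ = convOne k H A ∧ conv k μ γ = convOne k H A) :
    ∀ b : A, b ∈ S →
      conv k ((actL k A H γ μ) ∘ₗ lTensor H (actOn k A H (actL k A H γ μ) b))
          (sigMap k A H γ μ) =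
        conv k (sigMap k A H γ μ)
          ((actOn k A H (actL k A H γ μ) b) ∘ₗ LinearMap.mul' k H) := by
  intro b _
  have hμγ : toConv μ * toConv γ = 1 := ofConv_injective hconv.2
  set Γ := toConv (LinearMap.mul' k A ∘ₗ map γ γ)
  set M := toConv (LinearMap.mul' k A ∘ₗ map μ μ ∘ₗ (TensorProduct.comm k H H).toLinearMap)
  set Γ' := toConv (γ ∘ₗ LinearMap.mul' k H)
  set M' := toConv (μ ∘ₗ LinearMap.mul' k H)
  have hMΓ : M * Γ = 1 := mul'_map_comm_convMul_mul'_map_eq_one hμγ hμγ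
  have hM'Γ' : M' * Γ' = 1 := by
    simpa only [map_mul, map_one, convPrecomp_toConv, Bialgebra.toLinearMap_mulCoalgHom] using
      congrArg (convPrecomp (Bialgebra.mulCoalgHom k H)) hμγ
  have hσ : toConv (sigMap k A H γ μ) = Γ * M' := rfl
  rw [conv_eq_ofConv_convMul, conv_eq_ofConv_convMul, toConv_actL_comp_lTensor_actOn,
    toConv_actOn_actL_comp_mul', hσ]
  congr 1
  calc Γ * (convConst b * M) * (Γ * M') = Γ * convConst b * (M * Γ) * M' := by
        simp only [mul_assoc]
    _ = Γ * (M' * Γ') * convConst b * M' := by rw [hMΓ, hM'Γ', mul_one, mul_one]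
    _ = Γ * M' * (Γ' * (convConst b * M')) := by simp only [mul_assoc]

/-- with the induced weak action and cocycle, `B` is a twisted
`H`-module: `Σ (h₁ · (g₁ · b)) σ(h₂,g₂) = Σ σ(h₁,g₁) ((h₂g₂) · b)`. -/
theorem induced_twisted_module (k A H : Type) [Field k] [Ring A] [Algebra k A] [Ring H] [HopfAlgebra k H]
    (ρ : A →ₗ[k] A ⊗[k] H) (hA : IsComodAlg k H ρ)
    (S : Subalgebra k A) (hS : ∀ a : A, a ∈ S ↔ ρ a = a ⊗ₜ (1 : H))
    (γ μ : H →ₗ[k] A)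
    (hγcolin : ∀ h : H, ρ (γ h) = (rTensor H γ) (Coalgebra.comul (R := k) h))
    (hγone : γ (1 : H) = 1)
    (hconv : conv k γ μ = convOne k H A ∧ conv k μ γ = convOne k H A) :
    ∀ b : A, b ∈ S →
      conv k ((actL k A H γ μ) ∘ₗ lTensor H (actOn k A H (actL k A H γ μ) b))
          (sigMap k A H γ μ) =
        conv k (sigMap k A H γ μ)
          ((actOn k A H (actL k A H γ μ) b) ∘ₗ LinearMap.mul' k H) :=
  induced_twisted_module_general k A H S γ μ hconv

end CrossedGalois
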